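/- arXiv:nlin/0302007 — 3 statements merged into one kernel-verified Lean document; each statement's English description precedes it below -/
import Mathlib

section
/- Suppose ψ_α, φ_α (α = 1,2) satisfy the KL system with p = √(u₁u₂), u_α = |ψ_α|² + |φ_α|², and φ_α is nowhere zero. Then with ξ_α = ψ_α/φ̄_α, the identity (∂ξ_α)(∂̄ξ̄_α) = p² (1 + |ξ_α|²)² holds, and consequently (∂ξ₁)(∂̄ξ̄₁)/(1+|ξ₁|²)² = (∂ξ₂)(∂̄ξ̄₂)/(1+|ξ₂|²)². -/
open Complex ComplexConjugate

noncomputable def wd (f : ℂ → ℂ) (z : ℂ) : ℂ :=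
  (fderiv ℝ f z 1 - Complex.I * fderiv ℝ f z Complex.I) / 2

noncomputable def wdb (f : ℂ → ℂ) (z : ℂ) : ℂ :=
  (fderiv ℝ f z 1 + Complex.I * fderiv ℝ f z Complex.I) / 2

noncomputable def lnC (a : ℂ → ℝ) (z : ℂ) : ℂ := (Real.log (a z) : ℂ)

lemma fderiv_mul_apply (f g : ℂ → ℂ) (z v : ℂ) (hf : DifferentiableAt ℝ f z)
    (hg : DifferentiableAt ℝ g z) :
    fderiv ℝ (fun w => f w * g w) z v = fderiv ℝ f z v * g z + f z * fderiv ℝ g z v := by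
  rw [fderiv_fun_mul hf hg]
  simp [mul_comm]
  ring

lemma fderiv_inv_apply (g : ℂ → ℂ) (z v : ℂ) (hg : DifferentiableAt ℝ g z) (h0 : g z ≠ 0) :
    fderiv ℝ (fun w => (g w)⁻¹) z v = -(fderiv ℝ g z v) / (g z) ^ 2 := by
  have := ((hasFDerivAt_inv' (𝕜 := ℝ) h0).comp z hg.hasFDerivAt).fderiv
  rw [show (fun w => (g w)⁻¹) = Inv.inv ∘ g from rfl, this]
  simp only [ContinuousLinearMap.comp_apply, ContinuousLinearMap.neg_apply,
    ContinuousLinearMap.mulLeftRight_apply]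
  rw [sq]
  field_simp

lemma fderiv_div_apply (f g : ℂ → ℂ) (z v : ℂ) (hf : DifferentiableAt ℝ f z)
    (hg : DifferentiableAt ℝ g z) (h0 : g z ≠ 0) :
    fderiv ℝ (fun w => f w / g w) z v
      = (fderiv ℝ f z v * g z - f z * fderiv ℝ g z v) / (g z) ^ 2 := by
  simp only [div_eq_mul_inv]
  rw [fderiv_mul_apply f (fun w => (g w)⁻¹) z v hf (hg.inv h0),
    fderiv_inv_apply g z v hg h0]
  field_simp
  ring

lemma wd_div (f g : ℂ → ℂ) (z : ℂ) (hf : DifferentiableAt ℝ f z)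
    (hg : DifferentiableAt ℝ g z) (h0 : g z ≠ 0) :
    wd (fun w => f w / g w) z = (wd f z * g z - f z * wd g z) / (g z) ^ 2 := by
  unfold wd
  rw [fderiv_div_apply f g z 1 hf hg h0, fderiv_div_apply f g z Complex.I hf hg h0]
  field_simp
  ring

lemma wdb_div (f g : ℂ → ℂ) (z : ℂ) (hf : DifferentiableAt ℝ f z)
    (hg : DifferentiableAt ℝ g z) (h0 : g z ≠ 0) :
    wdb (fun w => f w / g w) z = (wdb f z * g z - f z * wdb g z) / (g z) ^ 2 := by
  unfold wdb
  rw [fderiv_div_apply f g z 1 hf hg h0, fderiv_div_apply f g z Complex.I hf hg h0]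
  field_simp
  ring

theorem stmt3' (ψ φ : Fin 2 → ℂ → ℂ) (p : ℂ → ℝ)
    (hψ : ∀ α, ContDiff ℝ (⊤ : ℕ∞) (ψ α)) (hφ : ∀ α, ContDiff ℝ (⊤ : ℕ∞) (φ α))
    (hKL1 : ∀ α z, wd (ψ α) z = (p z : ℂ) * φ α z)
    (hKL2 : ∀ α z, wdb (φ α) z = -(p z : ℂ) * ψ α z)
    (hKL3 : ∀ α z, wdb (fun w => conj (ψ α w)) z = (p z : ℂ) * conj (φ α z))
    (hKL4 : ∀ α z, wd (fun w => conj (φ α w)) z = -(p z : ℂ) * conj (ψ α z))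
    (hφ0 : ∀ α z, φ α z ≠ 0) :
    ∀ α z, wd (fun w => ψ α w / conj (φ α w)) z * wdb (fun w => conj (ψ α w / conj (φ α w))) z
        = ((p z : ℂ)) ^ 2 * (1 + (‖ψ α z / conj (φ α z)‖ ^ 2 : ℝ)) ^ 2 := by
  intro α z
  have hconj : Differentiable ℝ (conj : ℂ → ℂ) :=
    Complex.conjCLE.differentiable
  have hψd : DifferentiableAt ℝ (ψ α) z := ((hψ α).differentiable (by simp)).differentiableAt
  have hφd : DifferentiableAt ℝ (φ α) z := ((hφ α).differentiable (by simp)).differentiableAt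
  have hcφd : DifferentiableAt ℝ (fun w => conj (φ α w)) z :=
    (hconj (φ α z)).comp z hφd
  have hcψd : DifferentiableAt ℝ (fun w => conj (ψ α w)) z :=
    (hconj (ψ α z)).comp z hψd
  have hφz : φ α z ≠ 0 := hφ0 α z
  have hcφz : conj (φ α z) ≠ 0 := by simpa using hφz
  have e1 : wd (fun w => ψ α w / conj (φ α w)) z
      = ((p z : ℂ) * (φ α z * conj (φ α z)) + (p z : ℂ) * (ψ α z * conj (ψ α z)))
        / (conj (φ α z)) ^ 2 := by
    rw [wd_div (ψ α) (fun w => conj (φ α w)) z hψd hcφd hcφz, hKL1, hKL4]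
    ring
  have e2 : wdb (fun w => conj (ψ α w / conj (φ α w))) z
      = ((p z : ℂ) * (φ α z * conj (φ α z)) + (p z : ℂ) * (ψ α z * conj (ψ α z)))
        / (φ α z) ^ 2 := by
    have : (fun w => conj (ψ α w / conj (φ α w))) = fun w => conj (ψ α w) / φ α w := by
      funext w; rw [map_div₀, Complex.conj_conj]
    rw [this, wdb_div (fun w => conj (ψ α w)) (φ α) z hcψd hφd hφz, hKL3, hKL2]
    ring
  rw [e1, e2]
  set A : ℝ := ‖ψ α z‖ ^ 2 with hAdef
  set B : ℝ := ‖φ α z‖ ^ 2 with hBdef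
  have hA : ψ α z * conj (ψ α z) = ((A : ℝ) : ℂ) := by
    rw [Complex.mul_conj]
    norm_cast
    rw [hAdef, Complex.normSq_eq_norm_sq]
  have hB : φ α z * conj (φ α z) = ((B : ℝ) : ℂ) := by
    rw [Complex.mul_conj]
    norm_cast
    rw [hBdef, Complex.normSq_eq_norm_sq]
  have hnorm : (‖ψ α z / conj (φ α z)‖ ^ 2 : ℝ) = A / B := by
    rw [hAdef, hBdef, norm_div, div_pow, RCLike.norm_conj]
  have hBne : B ≠ 0 := pow_ne_zero 2 (norm_ne_zero_iff.mpr hφz)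
  have hBne' : ((B : ℝ) : ℂ) ≠ 0 := by exact_mod_cast hBne
  have key : (conj (φ α z)) ^ 2 * (φ α z) ^ 2 = ((B : ℝ) : ℂ) ^ 2 := by
    rw [← mul_pow, mul_comm, hB]
  have hcast : ((1 : ℂ) + ((A / B : ℝ) : ℂ)) = (((A : ℝ) : ℂ) + B) / B := by
    push_cast
    field_simp
    ring
  rw [hA, hB, hnorm, div_mul_div_comm, key, hcast]
  field_simp
  ring

theorem stmt3 (ψ φ : Fin 2 → ℂ → ℂ) (p : ℂ → ℝ)
    (hψ : ∀ α, ContDiff ℝ (⊤ : ℕ∞) (ψ α)) (hφ : ∀ α, ContDiff ℝ (⊤ : ℕ∞) (φ α))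
    (hp : ∀ z, p z = Real.sqrt ((‖ψ 0 z‖ ^ 2 + ‖φ 0 z‖ ^ 2) * (‖ψ 1 z‖ ^ 2 + ‖φ 1 z‖ ^ 2)))
    (hKL1 : ∀ α z, wd (ψ α) z = (p z : ℂ) * φ α z)
    (hKL2 : ∀ α z, wdb (φ α) z = -(p z : ℂ) * ψ α z)
    (hKL3 : ∀ α z, wdb (fun w => conj (ψ α w)) z = (p z : ℂ) * conj (φ α z))
    (hKL4 : ∀ α z, wd (fun w => conj (φ α w)) z = -(p z : ℂ) * conj (ψ α z))
    (hφ0 : ∀ α z, φ α z ≠ 0) :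
    (∀ α z, wd (fun w => ψ α w / conj (φ α w)) z * wdb (fun w => conj (ψ α w / conj (φ α w))) z
        = ((p z : ℂ)) ^ 2 * (1 + (‖ψ α z / conj (φ α z)‖ ^ 2 : ℝ)) ^ 2) ∧
    (∀ z, wd (fun w => ψ 0 w / conj (φ 0 w)) z * wdb (fun w => conj (ψ 0 w / conj (φ 0 w))) z
          / (1 + (‖ψ 0 z / conj (φ 0 z)‖ ^ 2 : ℝ)) ^ 2
        = wd (fun w => ψ 1 w / conj (φ 1 w)) z * wdb (fun w => conj (ψ 1 w / conj (φ 1 w))) z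
          / (1 + (‖ψ 1 z / conj (φ 1 z)‖ ^ 2 : ℝ)) ^ 2) := by
  have main := stmt3' ψ φ p hψ hφ hKL1 hKL2 hKL3 hKL4 hφ0
  refine ⟨main, fun z => ?_⟩
  have hne : ∀ α : Fin 2, ((1 : ℂ) + (‖ψ α z / conj (φ α z)‖ ^ 2 : ℝ)) ^ 2 ≠ 0 := by
    intro α
    apply pow_ne_zero
    have h1 : (0 : ℝ) < 1 + ‖ψ α z / conj (φ α z)‖ ^ 2 := by positivity
    intro h
    rw [show ((1 : ℂ) + (‖ψ α z / conj (φ α z)‖ ^ 2 : ℝ))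
        = ((1 + ‖ψ α z / conj (φ α z)‖ ^ 2 : ℝ) : ℂ) by push_cast; ring] at h
    exact h1.ne' (by exact_mod_cast h)
  rw [main 0 z, main 1 z, mul_div_assoc, mul_div_assoc,
    div_self (hne 0), div_self (hne 1)]
end

section
/- Let ξ_α : ℂ → ℂ be smooth, a_α : ℂ → ℝ positive smooth, and suppose ∂̄ ln a_α = -(∂̄∂ξ_α)/(2∂ξ_α) - ξ_α(∂̄ξ̄_α)/(1+|ξ_α|²) and ∂ ln a_α = -(∂̄∂ξ̄_α)/(2∂̄ξ̄_α) - ξ̄_α(∂ξ_α)/(1+|ξ_α|²), with ∂ξ_α and ∂̄ξ̄_α nowhere vanishing, and suppose there exist square roots s_α, t_α with s_α² = ∂ξ_α, t_α² = ∂̄ξ̄_α, t_α = s̄_α. Then the functions φ_α = a_α s_α and ψ_α = a_α ξ_α t_α satisfy the KL equations ∂̄φ_α = -p ψ_α and ∂ψ_α = p φ_α, where p = (∂ξ_α ∂̄ξ̄_α)^{1/2}/(1+|ξ_α|²) = s_α t_α/(1+|ξ_α|²). -/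
open Complex ComplexConjugate

lemma wd_mul {f g : ℂ → ℂ} {z : ℂ} (hf : DifferentiableAt ℝ f z) (hg : DifferentiableAt ℝ g z) :
    wd (fun w => f w * g w) z = wd f z * g z + f z * wd g z := by
  simp only [wd, fderiv_fun_mul hf hg, ContinuousLinearMap.add_apply, ContinuousLinearMap.smul_apply,
    smul_eq_mul]
  ring

lemma wdb_mul {f g : ℂ → ℂ} {z : ℂ} (hf : DifferentiableAt ℝ f z) (hg : DifferentiableAt ℝ g z) :
    wdb (fun w => f w * g w) z = wdb f z * g z + f z * wdb g z := by
  simp only [wdb, fderiv_fun_mul hf hg, ContinuousLinearMap.add_apply, ContinuousLinearMap.smul_apply,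
    smul_eq_mul]
  ring

lemma wd_sq {f : ℂ → ℂ} {z : ℂ} (hf : DifferentiableAt ℝ f z) :
    wd (fun w => f w ^ 2) z = 2 * f z * wd f z := by
  have := wd_mul hf hf
  simp only [← pow_two] at this
  rw [this]; ring

lemma wdb_sq {f : ℂ → ℂ} {z : ℂ} (hf : DifferentiableAt ℝ f z) :
    wdb (fun w => f w ^ 2) z = 2 * f z * wdb f z := by
  have := wdb_mul hf hf
  simp only [← pow_two] at this
  rw [this]; ring

lemma fderiv_ofReal_comp {a : ℂ → ℝ} {z : ℂ} (ha : DifferentiableAt ℝ a z) (v : ℂ) :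
    fderiv ℝ (fun w => ((a w : ℝ) : ℂ)) z v = ((fderiv ℝ a z v : ℝ) : ℂ) := by
  have : (fun w => ((a w : ℝ) : ℂ)) = Complex.ofRealCLM ∘ a := rfl
  rw [this, fderiv_comp z Complex.ofRealCLM.differentiableAt ha]
  simp

lemma fderiv_lnC {a : ℂ → ℝ} {z : ℂ} (ha : DifferentiableAt ℝ a z) (h0 : a z ≠ 0) (v : ℂ) :
    fderiv ℝ (lnC a) z v = (((a z)⁻¹ * fderiv ℝ a z v : ℝ) : ℂ) := by
  have hlog : HasFDerivAt (fun w => Real.log (a w)) ((a z)⁻¹ • fderiv ℝ a z) z :=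
    (Real.hasDerivAt_log h0).comp_hasFDerivAt z ha.hasFDerivAt
  have : HasFDerivAt (lnC a) (Complex.ofRealCLM.comp ((a z)⁻¹ • fderiv ℝ a z)) z :=
    Complex.ofRealCLM.hasFDerivAt.comp z hlog
  rw [this.fderiv]
  simp

lemma wd_lnC {a : ℂ → ℝ} {z : ℂ} (ha : DifferentiableAt ℝ a z) (h0 : 0 < a z) :
    wd (fun w => ((a w : ℝ) : ℂ)) z = (a z : ℂ) * wd (lnC a) z := by
  have h0' : a z ≠ 0 := ne_of_gt h0
  simp only [wd, fderiv_ofReal_comp ha, fderiv_lnC ha h0']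
  have h0c : ((a z : ℝ) : ℂ) ≠ 0 := by exact_mod_cast h0'
  push_cast
  field_simp

lemma wdb_lnC {a : ℂ → ℝ} {z : ℂ} (ha : DifferentiableAt ℝ a z) (h0 : 0 < a z) :
    wdb (fun w => ((a w : ℝ) : ℂ)) z = (a z : ℂ) * wdb (lnC a) z := by
  have h0' : a z ≠ 0 := ne_of_gt h0
  simp only [wdb, fderiv_ofReal_comp ha, fderiv_lnC ha h0']
  have h0c : ((a z : ℝ) : ℂ) ≠ 0 := by exact_mod_cast h0'
  push_cast
  field_simp

lemma diff_fderiv {f : ℂ → ℂ} (hf : ContDiff ℝ (⊤ : ℕ∞) f) :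
    DifferentiableAt ℝ (fderiv ℝ f) z :=
  ((hf.fderiv_right (m := 1) (by exact WithTop.coe_le_coe.mpr le_top)).differentiable one_ne_zero) z

lemma hasFDerivAt_fderiv_apply {f : ℂ → ℂ} (hf : ContDiff ℝ (⊤ : ℕ∞) f) (z v : ℂ) :
    HasFDerivAt (fun w => fderiv ℝ f w v)
      ((ContinuousLinearMap.apply ℝ ℂ v).comp (fderiv ℝ (fderiv ℝ f) z)) z :=
  ((ContinuousLinearMap.apply ℝ ℂ v).hasFDerivAt).comp z (diff_fderiv hf).hasFDerivAt

lemma fderiv_wd_apply {f : ℂ → ℂ} (hf : ContDiff ℝ (⊤ : ℕ∞) f) (z u : ℂ) :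
    fderiv ℝ (wd f) z u
      = (fderiv ℝ (fderiv ℝ f) z u 1 - Complex.I * fderiv ℝ (fderiv ℝ f) z u Complex.I) / 2 := by
  have h := (((hasFDerivAt_fderiv_apply hf z 1).sub
      ((hasFDerivAt_fderiv_apply hf z Complex.I).const_mul Complex.I)).mul_const ((2:ℂ)⁻¹))
  have he : wd f = fun w =>
      (fderiv ℝ f w 1 - Complex.I * fderiv ℝ f w Complex.I) * (2:ℂ)⁻¹ := by
    funext w; rw [wd, div_eq_mul_inv]
  have h2 : fderiv ℝ (fun w =>
      (fderiv ℝ f w 1 - Complex.I * fderiv ℝ f w Complex.I) * (2:ℂ)⁻¹) z = _ := h.fderiv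
  rw [he, h2]
  simp [div_eq_mul_inv]
  ring

lemma fderiv_wdb_apply {f : ℂ → ℂ} (hf : ContDiff ℝ (⊤ : ℕ∞) f) (z u : ℂ) :
    fderiv ℝ (wdb f) z u
      = (fderiv ℝ (fderiv ℝ f) z u 1 + Complex.I * fderiv ℝ (fderiv ℝ f) z u Complex.I) / 2 := by
  have h := (((hasFDerivAt_fderiv_apply hf z 1).add
      ((hasFDerivAt_fderiv_apply hf z Complex.I).const_mul Complex.I)).mul_const ((2:ℂ)⁻¹))
  have he : wdb f = fun w =>
      (fderiv ℝ f w 1 + Complex.I * fderiv ℝ f w Complex.I) * (2:ℂ)⁻¹ := by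
    funext w; rw [wdb, div_eq_mul_inv]
  have h2 : fderiv ℝ (fun w =>
      (fderiv ℝ f w 1 + Complex.I * fderiv ℝ f w Complex.I) * (2:ℂ)⁻¹) z = _ := h.fderiv
  rw [he, h2]
  simp [div_eq_mul_inv]
  ring

lemma wd_wdb_comm {f : ℂ → ℂ} (hf : ContDiff ℝ (⊤ : ℕ∞) f) (z : ℂ) :
    wd (wdb f) z = wdb (wd f) z := by
  have hsymm : fderiv ℝ (fderiv ℝ f) z 1 Complex.I = fderiv ℝ (fderiv ℝ f) z Complex.I 1 :=
    (hf.contDiffAt.isSymmSndFDerivAt ((by simp only [minSmoothness_of_isRCLikeNormedField]; exact WithTop.coe_le_coe.mpr le_top))) 1 Complex.I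
  rw [wd, wdb, fderiv_wdb_apply hf, fderiv_wdb_apply hf, fderiv_wd_apply hf, fderiv_wd_apply hf,
    hsymm]
  ring

lemma alg1 (az S T x W N : ℂ) (hS : S ≠ 0) (hN : N ≠ 0) :
    (az * (-W / (2 * S ^ 2) - x * T ^ 2 / N)) * S + az * (W / (2 * S))
      = -(S * T / N) * (az * x * T) := by
  field_simp
  ring

lemma alg2 (az S T x C V N : ℂ) (hT : T ≠ 0) (hN : N ≠ 0) (hNM : N = 1 + x * C) :
    (az * (-V / (2 * T ^ 2) - C * S ^ 2 / N) * x + az * S ^ 2) * T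
      + (az * x) * (V / (2 * T)) = (S * T / N) * (az * S) := by
  subst hNM
  have hN' : 1 + C * x ≠ 0 := by rwa [mul_comm C x]
  field_simp
  ring

theorem stmt5 (ξ : Fin 2 → ℂ → ℂ) (a : Fin 2 → ℂ → ℝ) (s t : Fin 2 → ℂ → ℂ)
    (hξ : ∀ α, ContDiff ℝ (⊤ : ℕ∞) (ξ α)) (ha : ∀ α, ContDiff ℝ (⊤ : ℕ∞) (a α)) (hapos : ∀ α z, 0 < a α z)
    (hs : ∀ α, ContDiff ℝ (⊤ : ℕ∞) (s α)) (ht : ∀ α, ContDiff ℝ (⊤ : ℕ∞) (t α))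
    (hwd0 : ∀ α z, wd (ξ α) z ≠ 0) (hwdb0 : ∀ α z, wdb (fun w => conj (ξ α w)) z ≠ 0)
    (hs2 : ∀ α z, (s α z) ^ 2 = wd (ξ α) z)
    (ht2 : ∀ α z, (t α z) ^ 2 = wdb (fun w => conj (ξ α w)) z)
    (hts : ∀ α z, t α z = conj (s α z))
    (h21 : ∀ z, wd (ξ 0) z * wdb (fun w => conj (ξ 0 w)) z / (1 + (‖ξ 0 z‖ ^ 2 : ℝ)) ^ 2
        = wd (ξ 1) z * wdb (fun w => conj (ξ 1 w)) z / (1 + (‖ξ 1 z‖ ^ 2 : ℝ)) ^ 2)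
    (hlna1 : ∀ α z, wdb (lnC (a α)) z
        = -(wdb (wd (ξ α)) z) / (2 * wd (ξ α) z)
          - ξ α z * wdb (fun w => conj (ξ α w)) z / (1 + (‖ξ α z‖ ^ 2 : ℝ)))
    (hlna2 : ∀ α z, wd (lnC (a α)) z
        = -(wdb (wd (fun w => conj (ξ α w))) z) / (2 * wdb (fun w => conj (ξ α w)) z)
          - conj (ξ α z) * wd (ξ α) z / (1 + (‖ξ α z‖ ^ 2 : ℝ))) :
    ∀ α z,
      wdb (fun w => (a α w : ℂ) * s α w) z
        = -(s α z * t α z / (1 + (‖ξ α z‖ ^ 2 : ℝ))) * ((a α z : ℂ) * ξ α z * t α z) ∧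
      wd (fun w => (a α w : ℂ) * ξ α w * t α w) z
        = (s α z * t α z / (1 + (‖ξ α z‖ ^ 2 : ℝ))) * ((a α z : ℂ) * s α z) := by
  intro α z
  have haD : DifferentiableAt ℝ (a α) z := (ha α).differentiable (by simp) z
  have haC : DifferentiableAt ℝ (fun w => ((a α w : ℝ) : ℂ)) z :=
    Complex.ofRealCLM.differentiableAt.comp z haD
  have hsD : DifferentiableAt ℝ (s α) z := (hs α).differentiable (by simp) z
  have htD : DifferentiableAt ℝ (t α) z := (ht α).differentiable (by simp) z
  have hξD : DifferentiableAt ℝ (ξ α) z := (hξ α).differentiable (by simp) z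
  have hconjξ : ContDiff ℝ (⊤ : ℕ∞) (fun w => conj (ξ α w)) :=
    Complex.conjCLE.toContinuousLinearMap.contDiff.comp (hξ α)
  have hsz : s α z ≠ 0 := by
    intro h
    exact hwd0 α z (by rw [← hs2 α z, h]; ring)
  have htz : t α z ≠ 0 := by
    intro h
    exact hwdb0 α z (by rw [← ht2 α z, h]; ring)
  have hNpos : (0 : ℝ) < 1 + ‖ξ α z‖ ^ 2 := by positivity
  have hN : (1 + ((‖ξ α z‖ ^ 2 : ℝ) : ℂ)) ≠ 0 := by
    intro h
    rw [← Complex.ofReal_one, ← Complex.ofReal_add] at h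
    exact ne_of_gt hNpos (by exact_mod_cast h)
  have hM : ξ α z * conj (ξ α z) = ((‖ξ α z‖ ^ 2 : ℝ) : ℂ) := by
    rw [Complex.mul_conj]
    norm_cast
    rw [Complex.normSq_eq_norm_sq]
  have hNM : (1 + ((‖ξ α z‖ ^ 2 : ℝ) : ℂ)) = 1 + ξ α z * conj (ξ α z) := by
    rw [hM]
  -- derivative of s
  have hwdbs : 2 * s α z * wdb (s α) z = wdb (wd (ξ α)) z := by
    rw [← wdb_sq hsD]
    congr 1
    exact funext (hs2 α)
  have hwdbsv : wdb (s α) z = wdb (wd (ξ α)) z / (2 * s α z) := by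
    rw [← hwdbs]
    field_simp
  -- derivative of t
  have hwdt : 2 * t α z * wd (t α) z = wdb (wd (fun w => conj (ξ α w))) z := by
    rw [← wd_wdb_comm hconjξ, ← wd_sq htD]
    congr 1
    exact funext (ht2 α)
  have hwdtv : wd (t α) z = wdb (wd (fun w => conj (ξ α w))) z / (2 * t α z) := by
    rw [← hwdt]
    field_simp
  constructor
  · -- part 1
    rw [wdb_mul haC hsD, wdb_lnC haD (hapos α z), hlna1 α z, ← hs2 α z, ← ht2 α z, hwdbsv]
    exact alg1 _ _ _ _ _ _ hsz hN
  · -- part 2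
    have hf : DifferentiableAt ℝ (fun w => ((a α w : ℝ) : ℂ) * ξ α w) z := haC.mul hξD
    rw [show (fun w => ((a α w : ℝ) : ℂ) * ξ α w * t α w)
        = (fun w => (((a α w : ℝ) : ℂ) * ξ α w) * t α w) from rfl,
      wd_mul hf htD, wd_mul haC hξD, wd_lnC haD (hapos α z), hlna2 α z, ← hs2 α z, ← ht2 α z,
      hwdtv]
    exact alg2 _ _ _ _ _ _ _ htz hN hNM
end

section
/- Let ξ₁, ξ₂ : ℂ → ℂ be smooth and define J = -(1/2)[ (∂ξ₁)(∂ξ̄₁)/(1+|ξ₁|²)² + (∂ξ₂)(∂ξ̄₂)/(1+|ξ₂|²)² ]. If both ξ₁ and ξ₂ satisfy the CP¹ sigma-model equations ∂̄∂ξ_α - 2ξ̄_α(∂̄ξ_α)(∂ξ_α)/(1+|ξ_α|²) = 0 together with their complex conjugates, then ∂̄J = 0, i.e. J is holomorphic. -/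
open Complex ComplexConjugate

lemma wd_of_hasFDerivAt {f : ℂ → ℂ} {f' : ℂ →L[ℝ] ℂ} {z : ℂ} (h : HasFDerivAt f f' z) :
    wd f z = (f' 1 - Complex.I * f' Complex.I) / 2 := by
  rw [wd, h.fderiv]

lemma wdb_of_hasFDerivAt {f : ℂ → ℂ} {f' : ℂ →L[ℝ] ℂ} {z : ℂ} (h : HasFDerivAt f f' z) :
    wdb f z = (f' 1 + Complex.I * f' Complex.I) / 2 := by
  rw [wdb, h.fderiv]

lemma hconj (ξ : ℂ → ℂ) (hξ : ContDiff ℝ 2 ξ) : ContDiff ℝ 2 (fun w => conj (ξ w)) := by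
  exact (Complex.conjCLE : ℂ ≃L[ℝ] ℂ).toContinuousLinearMap.contDiff.comp hξ

lemma wirt (f : ℂ → ℂ) (hf : ContDiff ℝ 2 f) (z : ℂ) :
    ∃ A' : ℂ →L[ℝ] ℂ, HasFDerivAt (wd f) A' z ∧
      A' 1 + Complex.I * A' Complex.I = 2 * wdb (wd f) z ∧
      A' 1 + Complex.I * A' Complex.I = 2 * wd (wdb f) z := by
  have hF1 : ContDiff ℝ 1 (fderiv ℝ f) := hf.fderiv_right (le_refl 2)
  have hF : HasFDerivAt (fderiv ℝ f) (fderiv ℝ (fderiv ℝ f) z) z :=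
    ((hF1.differentiable one_ne_zero) z).hasFDerivAt
  set F'' := fderiv ℝ (fderiv ℝ f) z with hF''
  have h1 : HasFDerivAt (fun w => fderiv ℝ f w 1)
      ((ContinuousLinearMap.apply ℝ ℂ (1:ℂ)).comp F'') z :=
    (ContinuousLinearMap.apply ℝ ℂ (1:ℂ)).hasFDerivAt.comp z hF
  have hI : HasFDerivAt (fun w => fderiv ℝ f w Complex.I)
      ((ContinuousLinearMap.apply ℝ ℂ (Complex.I)).comp F'') z :=
    (ContinuousLinearMap.apply ℝ ℂ (Complex.I)).hasFDerivAt.comp z hF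
  have hA : HasFDerivAt (wd f) _ z := (h1.sub (hI.const_mul Complex.I)).mul_const ((2:ℂ)⁻¹)
  have hB : HasFDerivAt (wdb f) _ z := (h1.add (hI.const_mul Complex.I)).mul_const ((2:ℂ)⁻¹)
  have hsym : ∀ v w, F'' v w = F'' w v := by
    intro v w
    exact (hf.contDiffAt.isSymmSndFDerivAt (by norm_num)) v w
  refine ⟨_, hA, ?_, ?_⟩
  · rw [wdb_of_hasFDerivAt hA]; ring
  · rw [wd_of_hasFDerivAt hB]
    simp only [ContinuousLinearMap.coe_sub', ContinuousLinearMap.coe_smul',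
      Pi.sub_apply, Pi.smul_apply, ContinuousLinearMap.add_apply,
      ContinuousLinearMap.sub_apply, ContinuousLinearMap.smul_apply,
      ContinuousLinearMap.comp_apply, ContinuousLinearMap.apply_apply, smul_eq_mul,
      ContinuousLinearMap.coe_add']
    rw [hsym 1 Complex.I]
    ring

lemma key (ξ : ℂ → ℂ) (hξ : ContDiff ℝ 2 ξ)
    (heq : ∀ z, wdb (wd ξ) z
        - 2 * conj (ξ z) * wdb ξ z * wd ξ z / (1 + (‖ξ z‖ ^ 2 : ℝ)) = 0)
    (heq' : ∀ z, wd (wdb (fun w => conj (ξ w))) z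
        - 2 * ξ z * wd (fun w => conj (ξ w)) z * wdb (fun w => conj (ξ w)) z
          / (1 + (‖ξ z‖ ^ 2 : ℝ)) = 0) (z : ℂ) :
    ∃ T' : ℂ →L[ℝ] ℂ,
      HasFDerivAt (fun w => wd ξ w * wd (fun v => conj (ξ v)) w
        / (1 + (‖ξ w‖ ^ 2 : ℝ)) ^ 2) T' z ∧
      T' 1 + Complex.I * T' Complex.I = 0 := by
  set η : ℂ → ℂ := fun w => conj (ξ w) with hη_def
  have hη : ContDiff ℝ 2 η := hconj ξ hξ
  have hfun : (fun w => wd ξ w * wd (fun v => conj (ξ v)) w / (1 + (‖ξ w‖ ^ 2 : ℝ)) ^ 2)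
      = (fun w => wd ξ w * wd η w * ((1 + ξ w * η w) * (1 + ξ w * η w))⁻¹) := by
    funext w
    rw [div_eq_mul_inv, sq]
    norm_num [hη_def, Complex.mul_conj, Complex.normSq_eq_norm_sq]
  obtain ⟨A', hA, hA1, _⟩ := wirt ξ hξ z
  obtain ⟨B', hB, _, hB2⟩ := wirt η hη z
  have hξz : HasFDerivAt ξ (fderiv ℝ ξ z) z :=
    ((hξ.differentiable (by norm_num)) z).hasFDerivAt
  have hηz : HasFDerivAt η (fderiv ℝ η z) z :=
    ((hη.differentiable (by norm_num)) z).hasFDerivAt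
  have hW : HasFDerivAt (fun w => (1:ℂ) + ξ w * η w) _ z := (hξz.mul hηz).const_add 1
  -- nonvanishing
  have hXY : ξ z * η z = ((‖ξ z‖ ^ 2 : ℝ) : ℂ) := by
    simp [hη_def, Complex.mul_conj, Complex.normSq_eq_norm_sq]
  have hWne : (1:ℂ) + ξ z * η z ≠ 0 := by
    rw [hXY]
    have h1 : ((1 + ‖ξ z‖ ^ 2 : ℝ) : ℂ) ≠ 0 := by
      exact_mod_cast (by positivity : (1 + ‖ξ z‖ ^ 2 : ℝ) ≠ 0)
    push_cast at h1 ⊢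
    exact h1
  have hmne : ((1:ℂ) + ξ z * η z) * ((1:ℂ) + ξ z * η z) ≠ 0 := mul_ne_zero hWne hWne
  have hinv : HasFDerivAt (fun w => (((1:ℂ) + ξ w * η w) * ((1:ℂ) + ξ w * η w))⁻¹) _ z :=
    ((hasDerivAt_inv hmne).hasFDerivAt.restrictScalars ℝ).comp z (hW.mul hW)
  have hT : HasFDerivAt (fun w => wd ξ w * wd η w * ((1 + ξ w * η w) * (1 + ξ w * η w))⁻¹) _ z :=
    (hA.mul hB).mul hinv
  rw [hfun]
  refine ⟨_, hT, ?_⟩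
  have eA := heq z
  rw [sub_eq_zero] at eA
  have EA : (A' 1 + Complex.I * A' Complex.I) * (1 + ξ z * η z)
      = 4 * conj (ξ z) * wdb ξ z * wd ξ z := by
    rw [hA1, eA, ← hXY]
    field_simp
    ring
  have eB := heq' z
  rw [sub_eq_zero] at eB
  have EB : (B' 1 + Complex.I * B' Complex.I) * (1 + ξ z * η z)
      = 4 * ξ z * wd η z * wdb η z := by
    rw [hB2]
    rw [hη_def] at eB ⊢
    rw [eB, ← hXY]
    field_simp
    ring
  simp only [ContinuousLinearMap.add_apply, ContinuousLinearMap.smul_apply,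
    ContinuousLinearMap.comp_apply, ContinuousLinearMap.coe_restrictScalars',
    ContinuousLinearMap.smulRight_apply, ContinuousLinearMap.one_apply,
    smul_eq_mul, ContinuousLinearMap.coe_smul', Pi.smul_apply,
    ContinuousLinearMap.toSpanSingleton_apply, Pi.mul_apply]
  simp only [wdb] at EA EB
  set c : ℂ := (1 + ξ z * η z)⁻¹ with hc_def
  have hc : (1 + ξ z * η z) * c = 1 := mul_inv_cancel₀ hWne
  have e2 : ((1 + ξ z * η z) * (1 + ξ z * η z))⁻¹ = c ^ 2 := by
    rw [hc_def, mul_inv]; ring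
  have e4 : ((((1:ℂ) + ξ z * η z) * (1 + ξ z * η z)) ^ 2)⁻¹ = c ^ 4 := by
    rw [← inv_pow, e2]; ring
  rw [e2, e4]
  linear_combination (c^3 * wd η z) * EA + (c^3 * wd ξ z) * EB +
    (-2 * wd ξ z * wd η z * (ξ z * (fderiv ℝ η z 1 + Complex.I * fderiv ℝ η z Complex.I)
        + η z * (fderiv ℝ ξ z 1 + Complex.I * fderiv ℝ ξ z Complex.I)) * c^3
      - c^2 * wd ξ z * (B' 1 + Complex.I * B' Complex.I)
      - c^2 * wd η z * (A' 1 + Complex.I * A' Complex.I)) * hc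

theorem stmt12 (ξ₁ ξ₂ : ℂ → ℂ)
    (hξ₁ : ContDiff ℝ 2 ξ₁) (hξ₂ : ContDiff ℝ 2 ξ₂)
    (heq₁ : ∀ z, wdb (wd ξ₁) z
        - 2 * conj (ξ₁ z) * wdb ξ₁ z * wd ξ₁ z / (1 + (‖ξ₁ z‖ ^ 2 : ℝ)) = 0)
    (heq₂ : ∀ z, wdb (wd ξ₂) z
        - 2 * conj (ξ₂ z) * wdb ξ₂ z * wd ξ₂ z / (1 + (‖ξ₂ z‖ ^ 2 : ℝ)) = 0)
    (heq₁' : ∀ z, wd (wdb (fun w => conj (ξ₁ w))) z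
        - 2 * ξ₁ z * wd (fun w => conj (ξ₁ w)) z * wdb (fun w => conj (ξ₁ w)) z
          / (1 + (‖ξ₁ z‖ ^ 2 : ℝ)) = 0)
    (heq₂' : ∀ z, wd (wdb (fun w => conj (ξ₂ w))) z
        - 2 * ξ₂ z * wd (fun w => conj (ξ₂ w)) z * wdb (fun w => conj (ξ₂ w)) z
          / (1 + (‖ξ₂ z‖ ^ 2 : ℝ)) = 0) :
    ∀ z, wdb (fun w => -(1/2 : ℂ) *
        (wd ξ₁ w * wd (fun v => conj (ξ₁ v)) w / (1 + (‖ξ₁ w‖ ^ 2 : ℝ)) ^ 2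
          + wd ξ₂ w * wd (fun v => conj (ξ₂ v)) w / (1 + (‖ξ₂ w‖ ^ 2 : ℝ)) ^ 2)) z = 0 := by
  intro z
  obtain ⟨T₁', hT₁, e₁⟩ := key ξ₁ hξ₁ heq₁ heq₁' z
  obtain ⟨T₂', hT₂, e₂⟩ := key ξ₂ hξ₂ heq₂ heq₂' z
  have hJ : HasFDerivAt (fun w => -(1/2 : ℂ) *
      (wd ξ₁ w * wd (fun v => conj (ξ₁ v)) w / (1 + (‖ξ₁ w‖ ^ 2 : ℝ)) ^ 2
        + wd ξ₂ w * wd (fun v => conj (ξ₂ v)) w / (1 + (‖ξ₂ w‖ ^ 2 : ℝ)) ^ 2))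
      ((-(1/2 : ℂ)) • (T₁' + T₂')) z := (hT₁.add hT₂).const_mul (-(1/2 : ℂ))
  rw [wdb_of_hasFDerivAt hJ]
  simp only [ContinuousLinearMap.smul_apply, ContinuousLinearMap.add_apply, smul_eq_mul]
  linear_combination (-(1/4) : ℂ) * e₁ + (-(1/4) : ℂ) * e₂
end
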